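/- The birational morphism η : X₁ → X₀, (x,y,z₁,z₂,w) ↦ (x, y, xz₁, yz₁ + 1, w), is well defined (the defining equations of X₀ pull back into the ideal of X₁) and is equivariant for the 𝔾ₐ-actions given by the locally nilpotent derivations ∂₁ = x∂_{z₁} + (2yz₁+1)∂_{z₂} + y²∂_w on X₁ and ∂₀ = x²∂_p + xy∂_q + y²∂_r on X₀; that is, ∂₁ ∘ η* = η* ∘ ∂₀ on the coordinate ring of X₀. -/

import Mathlib

open MvPolynomial

/-- Coordinates on `𝔸⁵`.  For `X₀`: `x = X 0`, `y = X 1`, `p = X 2`, `q = X 3`,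
`r = X 4`.  For `X₁`: `x = X 0`, `y = X 1`, `z₁ = X 2`, `z₂ = X 3`, `w = X 4`. -/
noncomputable abbrev R5 : Type := MvPolynomial (Fin 5) ℂ

/-- `η* : ℂ[x,y,p,q,r] → ℂ[x,y,z₁,z₂,w]`, `p ↦ xz₁`, `q ↦ yz₁ + 1`, `r ↦ w`,
fixing `x, y`; the co-morphism of `η : X₁ → X₀`,
`(x,y,z₁,z₂,w) ↦ (x, y, xz₁, yz₁+1, w)`. -/
noncomputable def ηstar : R5 →ₐ[ℂ] R5 :=
  MvPolynomial.aeval ![X 0, X 1, X 0 * X 2, X 1 * X 2 + 1, X 4]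

/-- `∂₀ = x²∂_p + xy∂_q + y²∂_r`. -/
noncomputable def D₀ : Derivation ℂ R5 R5 :=
  MvPolynomial.mkDerivation ℂ
    (fun i => if i = 2 then (X 0) ^ 2
              else if i = 3 then X 0 * X 1
              else if i = 4 then (X 1) ^ 2 else 0)

/-- `∂₁ = x∂_{z₁} + (2yz₁+1)∂_{z₂} + y²∂_w`. -/
noncomputable def D₁ : Derivation ℂ R5 R5 :=
  MvPolynomial.mkDerivation ℂ
    (fun i => if i = 2 then X 0
              else if i = 3 then 2 * X 1 * X 2 + 1
              else if i = 4 then (X 1) ^ 2 else 0)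

theorem MvPolynomial.derivation_intertwine_of_X {σ R B : Type*} [CommSemiring R]
    [CommSemiring B] [Algebra R B] (φ : MvPolynomial σ R →ₐ[R] B)
    (D : Derivation R (MvPolynomial σ R) (MvPolynomial σ R)) (D' : Derivation R B B)
    (h : ∀ i, D' (φ (X i)) = φ (D (X i))) (g : MvPolynomial σ R) :
    D' (φ g) = φ (D g) := by
  induction g using MvPolynomial.induction_on with
  | C a => simp
  | add p q hp hq => simp only [map_add, hp, hq]
  | mul_X p i hp => simp only [map_mul, Derivation.leibniz, smul_eq_mul, map_add, hp, h]

theorem ηstar_xr_sub_yq :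
    ηstar (X 0 * X 4 - X 1 * X 3) = X 0 * X 4 - X 1 * (X 1 * X 2 + 1) := by
  simp only [ηstar, map_sub, map_mul, aeval_X, Matrix.cons_val]

theorem ηstar_yp_sub_x_mul_q_sub_one : ηstar (X 1 * X 2 - X 0 * (X 3 - 1)) = 0 := by
  simp only [ηstar, map_sub, map_mul, map_one, aeval_X, Matrix.cons_val]
  ring

theorem ηstar_pr_sub_q_mul_q_sub_one :
    ηstar (X 2 * X 4 - X 3 * (X 3 - 1)) =
      X 1 * (X 0 * X 3 - X 2 * (X 1 * X 2 + 1)) + X 0 * (X 2 * X 4 - X 1 * X 3) := by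
  simp only [ηstar, map_sub, map_mul, map_one, aeval_X, Matrix.cons_val]
  ring

theorem D₁_ηstar_X (i : Fin 5) : D₁ (ηstar (X i)) = ηstar (D₀ (X i)) := by
  simp only [ηstar, D₀, D₁, aeval_X, mkDerivation_X]
  fin_cases i <;>
    simp only [Fin.isValue, Matrix.cons_val, Fin.reduceEq, Fin.reduceFinMk, ↓reduceIte, map_zero,
      map_pow, map_mul, map_add, Derivation.leibniz, Derivation.map_one_eq_zero, mkDerivation_X,
      aeval_X, smul_eq_mul] <;>
    ring

/-- The birational morphism `η : X₁ → X₀`, `(x,y,z₁,z₂,w) ↦ (x,y,xz₁,yz₁+1,w)`, is well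
defined — the defining equations `xr - yq`, `yp - x(q-1)`, `pr - q(q-1)` of `X₀` pull
back under `η*` into the ideal `(xw - y(yz₁+1), xz₂ - z₁(yz₁+1), z₁w - yz₂)` of `X₁` —
and is equivariant for the `𝔾ₐ`-actions given by `∂₁` and `∂₀`:
`∂₁ ∘ η* = η* ∘ ∂₀`. -/
theorem stmt_19 :
    (ηstar (X 0 * X 4 - X 1 * X 3) ∈
      Ideal.span {(X 0 * X 4 - X 1 * (X 1 * X 2 + 1) : R5),
        X 0 * X 3 - X 2 * (X 1 * X 2 + 1), X 2 * X 4 - X 1 * X 3}) ∧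
    (ηstar (X 1 * X 2 - X 0 * (X 3 - 1)) ∈
      Ideal.span {(X 0 * X 4 - X 1 * (X 1 * X 2 + 1) : R5),
        X 0 * X 3 - X 2 * (X 1 * X 2 + 1), X 2 * X 4 - X 1 * X 3}) ∧
    (ηstar (X 2 * X 4 - X 3 * (X 3 - 1)) ∈
      Ideal.span {(X 0 * X 4 - X 1 * (X 1 * X 2 + 1) : R5),
        X 0 * X 3 - X 2 * (X 1 * X 2 + 1), X 2 * X 4 - X 1 * X 3}) ∧
    ∀ g : R5, D₁ (ηstar g) = ηstar (D₀ g) := by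
  refine ⟨?_, ?_, ?_, derivation_intertwine_of_X ηstar D₀ D₁ D₁_ηstar_X⟩
  · rw [ηstar_xr_sub_yq]
    exact Ideal.subset_span (by simp)
  · rw [ηstar_yp_sub_x_mul_q_sub_one]
    exact zero_mem _
  · rw [ηstar_pr_sub_q_mul_q_sub_one]
    exact add_mem (Ideal.mul_mem_left _ _ (Ideal.subset_span (by simp)))
      (Ideal.mul_mem_left _ _ (Ideal.subset_span (by simp)))
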